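/- arXiv:2304.04296 — 4 statements merged into one kernel-verified Lean document; each statement's English description precedes it below -/
import Mathlib

section
/- For every integer k >= 1, the twincut graph G_k is triangle-free. -/
/-- A structured tree: a rooted tree together with, at each internal node,
a graph on its children. A `leaf` is a tree with a single (leaf) node; a
`node ι c g` has children indexed by `ι`, subtrees `c i`, and the graph `g`
on the children. -/
inductive STree : Type 1 where
  | leaf : STree
  | node : (ι : Type) → (ι → STree) → SimpleGraph ι → STree

namespace STree

/-- The type of nodes of a structured tree. -/
def NodeType : STree → Type
  | leaf => PUnit
  | node ι c _ => PUnit ⊕ Σ i : ι, NodeType (c i)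

/-- The type of branches (root-to-leaf paths) of a structured tree. -/
def Branch : STree → Type
  | leaf => PUnit
  | node _ c _ => Σ i, Branch (c i)

/-- The root of a structured tree, as a node. -/
def root : (t : STree) → t.NodeType
  | leaf => PUnit.unit
  | node _ _ _ => Sum.inl PUnit.unit

/-- `onBranch t b u` means that the node `u` lies on the branch `b`. -/
def onBranch : (t : STree) → t.Branch → t.NodeType → Prop
  | leaf, _, _ => True
  | node _ c _, ⟨i, b⟩, u =>
      match u with
      | Sum.inl _ => True
      | Sum.inr ⟨j, w⟩ => ∃ h : j = i, onBranch (c i) b (h ▸ w)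

/-- Adjacency between tree nodes in the realization: the union of the edges
of the graphs `g(v)` placed on the children of each internal node `v`
(tree edges are *not* included). -/
def treeAdj : (t : STree) → t.NodeType → t.NodeType → Prop
  | leaf, _, _ => False
  | node ι c g, u, v =>
      match u, v with
      | Sum.inr ⟨i, u'⟩, Sum.inr ⟨j, v'⟩ =>
          (∃ h : i = j, treeAdj (c j) (h ▸ u') v') ∨
          (g.Adj i j ∧ u' = root (c i) ∧ v' = root (c j))
      | _, _ => False

/-- The realization `R(T,g)` of a structured tree: its vertices are the tree
nodes together with the branches; edges are those of the graphs `g(v)`, plus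
an edge from each branch vertex to every tree node lying on that branch. -/
def realization (t : STree) : SimpleGraph (t.NodeType ⊕ t.Branch) :=
  SimpleGraph.fromRel (fun x y =>
    match x, y with
    | Sum.inl u, Sum.inl v => treeAdj t u v
    | Sum.inl u, Sum.inr b => onBranch t b u
    | Sum.inr b, Sum.inl u => onBranch t b u
    | Sum.inr _, Sum.inr _ => False)

/-- The level of a node (the root is at level 1). -/
def level : (t : STree) → t.NodeType → ℕ
  | leaf, _ => 1
  | node _ c _, u =>
      match u with
      | Sum.inl _ => 1
      | Sum.inr ⟨i, w⟩ => level (c i) w + 1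

/-- `IsInternalGraphOf t ⟨ι, g⟩` means that `g` is the graph attached to some
internal node of `t` (on its children, indexed by `ι`). -/
inductive IsInternalGraphOf : STree → (Σ ι : Type, SimpleGraph ι) → Prop where
  | here : ∀ (ι : Type) (c : ι → STree) (g : SimpleGraph ι),
      IsInternalGraphOf (node ι c g) ⟨ι, g⟩
  | child : ∀ (ι : Type) (c : ι → STree) (g : SimpleGraph ι) (i : ι) (p),
      IsInternalGraphOf (c i) p → IsInternalGraphOf (node ι c g) p

end STree

/-- Builds the structured tree in which all nodes at level `i` carry the
`i`-th graph of the list on their children (so the tree has `L.length + 1`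
levels). -/
def buildTree : List (Σ V : Type, SimpleGraph V) → STree
  | [] => .leaf
  | ⟨ι, g⟩ :: rest => .node ι (fun _ => buildTree rest) g

/-- The realization of a structured tree, packaged with its vertex type. -/
def realizationSigma (t : STree) : Σ V : Type, SimpleGraph V :=
  ⟨t.NodeType ⊕ t.Branch, t.realization⟩

/-- `twincutList m` is the list `[G₂, G₃, …, G_{m+1}]` of twincut graphs. -/
def twincutList : ℕ → List (Σ V : Type, SimpleGraph V)
  | 0 => []
  | m + 1 => twincutList m ++ [realizationSigma (buildTree (twincutList m))]

/-- The structured tree `T_{m+2}` whose realization is the twincut graph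
`G_{m+2}`: it has `m + 1` levels, and every node at level `i ≤ m` carries
the graph `G_{i+1}` on its children. -/
def twincutTree (m : ℕ) : STree := buildTree (twincutList m)

/-- The twincut graphs: `G 1` is the one-vertex graph, and for `k ≥ 2`,
`G k` is the realization of the structured tree `T_k`. -/
def twincutG : ℕ → Σ V : Type, SimpleGraph V
  | 0 => ⟨PUnit, ⊥⟩
  | 1 => ⟨PUnit, ⊥⟩
  | (m + 2) => realizationSigma (twincutTree m)


/-! Branch vertices are pairwise non-adjacent, and two tree nodes on a common branch are never
adjacent (an edge between tree nodes joins two children of one node), so a triangle consists of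
tree nodes only. An edge between tree nodes either lies inside one child subtree or joins the roots
of two sibling subtrees along `g(v)`, and a root has no neighbour inside its own subtree; hence a
triangle of tree nodes lies inside one subtree or is a triangle of some `g(v)`. For the twincut
graphs every `g(v)` is an earlier twincut graph, and induction concludes. -/

open SimpleGraph

namespace STree

theorem not_treeAdj_root_left (t : STree) (v : t.NodeType) : ¬ treeAdj t (root t) v := by
  cases t with
  | leaf => exact id
  | node => cases v <;> exact id

theorem treeAdj_symm {t : STree} {u v : t.NodeType} (h : treeAdj t u v) : treeAdj t v u := by
  induction t with
  | leaf => exact h.elim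
  | node ι c g ih =>
    rcases u with _ | ⟨i, u'⟩ <;> rcases v with _ | ⟨j, v'⟩ <;> try exact h.elim
    rcases h with ⟨rfl, h⟩ | ⟨hg, hu, hv⟩
    · exact Or.inl ⟨rfl, ih _ h⟩
    · exact Or.inr ⟨hg.symm, hv, hu⟩

theorem not_treeAdj_of_onBranch {t : STree} {b : t.Branch} {u v : t.NodeType}
    (hu : onBranch t b u) (hv : onBranch t b v) : ¬ treeAdj t u v := by
  induction t with
  | leaf => exact id
  | node ι c g ih =>
    obtain ⟨i, b⟩ := b
    rcases u with _ | ⟨j, u'⟩ <;> rcases v with _ | ⟨k, v'⟩ <;> try exact id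
    obtain ⟨rfl, hu⟩ := hu
    obtain ⟨rfl, hv⟩ := hv
    -- the equation is now `j = j`, so the cast in `h` reduces away
    rintro (⟨_, h⟩ | ⟨hg, -⟩)
    · exact ih _ hu hv h
    · exact g.irrefl hg

theorem false_of_treeAdj_triangle {t : STree}
    (ht : ∀ p, IsInternalGraphOf t p → p.2.CliqueFree 3) {u v w : t.NodeType}
    (huv : treeAdj t u v) (huw : treeAdj t u w) (hvw : treeAdj t v w) : False := by
  induction t with
  | leaf => exact huv
  | node ι c g ih =>
    rcases u with _ | ⟨i, u'⟩ <;> rcases v with _ | ⟨j, v'⟩ <;> rcases w with _ | ⟨k, w'⟩ <;>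
      try first | exact huv.elim | exact huw.elim
    rcases huv with ⟨rfl, huv⟩ | ⟨hij, rfl, rfl⟩
    · rcases huw with ⟨rfl, huw⟩ | ⟨-, rfl, -⟩
      · rcases hvw with ⟨_, hvw⟩ | ⟨hii, -⟩
        · exact ih i (fun p hp => ht p (.child ι c g i p hp)) huv huw hvw
        · exact g.irrefl hii
      · exact not_treeAdj_root_left _ _ huv
    · rcases huw with ⟨rfl, huw⟩ | ⟨hik, -, rfl⟩
      · exact not_treeAdj_root_left _ _ huw
      · rcases hvw with ⟨rfl, hvw⟩ | ⟨hjk, -⟩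
        · exact not_treeAdj_root_left _ _ hvw
        · classical
          exact ht _ (.here ι c g) {i, j, k} (is3Clique_triple_iff.2 ⟨hij, hik, hjk⟩)

variable {t : STree}

theorem treeAdj_of_realization_adj {u v : t.NodeType}
    (h : t.realization.Adj (.inl u) (.inl v)) : treeAdj t u v :=
  h.2.elim id treeAdj_symm

theorem onBranch_of_realization_adj {u : t.NodeType} {b : t.Branch}
    (h : t.realization.Adj (.inl u) (.inr b)) : onBranch t b u :=
  h.2.elim id id

theorem not_realization_adj_inr_inr (b b' : t.Branch) :
    ¬ t.realization.Adj (.inr b) (.inr b') :=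
  fun h => h.2.elim id id

theorem realization_cliqueFree (ht : ∀ p, IsInternalGraphOf t p → p.2.CliqueFree 3) :
    t.realization.CliqueFree 3 := by
  classical
  intro s hs
  obtain ⟨x, y, z, hxy, hxz, hyz, -⟩ := is3Clique_iff.1 hs
  rcases x with u | b <;> rcases y with v | b' <;> rcases z with w | b''
  · exact false_of_treeAdj_triangle ht (treeAdj_of_realization_adj hxy)
      (treeAdj_of_realization_adj hxz) (treeAdj_of_realization_adj hyz)
  · exact not_treeAdj_of_onBranch (onBranch_of_realization_adj hxz)
      (onBranch_of_realization_adj hyz) (treeAdj_of_realization_adj hxy)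
  · exact not_treeAdj_of_onBranch (onBranch_of_realization_adj hxy)
      (onBranch_of_realization_adj hyz.symm) (treeAdj_of_realization_adj hxz)
  · exact not_realization_adj_inr_inr _ _ hyz
  · exact not_treeAdj_of_onBranch (onBranch_of_realization_adj hxy.symm)
      (onBranch_of_realization_adj hxz.symm) (treeAdj_of_realization_adj hyz)
  · exact not_realization_adj_inr_inr _ _ hxz
  · exact not_realization_adj_inr_inr _ _ hxy
  · exact not_realization_adj_inr_inr _ _ hxy

end STree

theorem mem_of_isInternalGraphOf_buildTree {L : List (Σ V : Type, SimpleGraph V)}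
    {p : Σ V : Type, SimpleGraph V} (h : (buildTree L).IsInternalGraphOf p) : p ∈ L := by
  induction L with
  | nil => cases h
  | cons q L ih =>
    obtain ⟨ι, g⟩ := q
    cases h with
    | here => exact List.mem_cons_self
    | child _ _ _ _ _ h => exact List.mem_cons_of_mem _ (ih h)

theorem cliqueFree_of_mem_twincutList {m : ℕ} {p : Σ V : Type, SimpleGraph V}
    (hp : p ∈ twincutList m) : p.2.CliqueFree 3 := by
  induction m generalizing p with
  | zero => simp [twincutList] at hp
  | succ m ih =>
    rw [twincutList, List.mem_append, List.mem_singleton] at hp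
    rcases hp with hp | rfl
    · exact ih hp
    · exact STree.realization_cliqueFree fun q hq => ih (mem_of_isInternalGraphOf_buildTree hq)

theorem twincut_triangleFree_general (k : ℕ) :
    (twincutG k).2.CliqueFree 3 := by
  match k with
  | 0 | 1 => exact cliqueFree_bot (by norm_num)
  | m + 2 =>
    exact STree.realization_cliqueFree fun p hp =>
      cliqueFree_of_mem_twincutList (mem_of_isInternalGraphOf_buildTree hp)

/-- every twincut graph is triangle-free. -/
theorem twincut_triangleFree (k : ℕ) (hk : 1 ≤ k) :
    (twincutG k).2.CliqueFree 3 :=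
  twincut_triangleFree_general k
end

section
/- For every integer k >= 1, the chromatic number of the twincut graph G_k equals k. -/
/-!
Upper bound: if every graph attached to the tree is `n`-colourable, colour the tree nodes top-down
with `n` colours, colouring the children of each node by a colouring of the graph they carry
(each child's subtree is coloured with its root's colour prescribed); the branch vertices, which
are pairwise non-adjacent, all get one new colour. Since `χ(G_i) = i ≤ k - 1` for the graphs on
`T_k`, this gives `k` colours.

Lower bound: given a colouring of `G_k` with `k - 1` colours, walk down `T_k` from the root. Having
met `i` distinct colours on the way to a node at level `i`, its children carry `G_{i+1}`, which is
not `i`-colourable, so some child has a colour not met yet. The branch found this way meets all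
`k - 1` colours, so its branch vertex, adjacent to every node on it, has no colour left.
-/

namespace STree

theorem treeAdj_irrefl : ∀ (t : STree) (u : t.NodeType), ¬ t.treeAdj u u
  | leaf, _ => id
  | node _ _ _, Sum.inl _ => id
  | node _ c g, Sum.inr ⟨i, w⟩ => by
    rintro (⟨_, h⟩ | ⟨h, -⟩)
    · exact treeAdj_irrefl (c i) w h
    · exact g.irrefl h

theorem realization_colorable_succ {t : STree} {n : ℕ} (f : t.NodeType → Fin n)
    (hf : ∀ u v, t.treeAdj u v → f u ≠ f v) : t.realization.Colorable (n + 1) := by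
  refine ⟨.mk (Sum.elim (fun u => (f u).castSucc) (fun _ => Fin.last n)) ?_⟩
  rintro (u | b) (v | b') hadj <;> rw [realization, SimpleGraph.fromRel_adj] at hadj
  · rcases hadj.2 with h | h
    · exact fun he => hf u v h (Fin.castSucc_injective _ he)
    · exact fun he => hf v u h (Fin.castSucc_injective _ he).symm
  · exact (Fin.castSucc_lt_last (f u)).ne
  · exact (Fin.castSucc_lt_last (f v)).ne'
  · simp at hadj

end STree

open STree

theorem SimpleGraph.Coloring.ne_of_treeAdj {t : STree} {α : Type*} (C : t.realization.Coloring α)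
    {u v : t.NodeType} (h : t.treeAdj u v) : C (Sum.inl u) ≠ C (Sum.inl v) :=
  C.valid <| (SimpleGraph.fromRel_adj _ _ _).2
    ⟨fun huv => treeAdj_irrefl t u (Sum.inl_injective huv ▸ h), Or.inl h⟩

theorem SimpleGraph.Coloring.ne_of_onBranch {t : STree} {α : Type*} (C : t.realization.Coloring α)
    {b : t.Branch} {u : t.NodeType} (h : t.onBranch b u) : C (Sum.inr b) ≠ C (Sum.inl u) :=
  C.valid <| (SimpleGraph.fromRel_adj _ _ _).2 ⟨Sum.inr_ne_inl, Or.inl h⟩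

theorem exists_treeAdj_coloring_buildTree {n : ℕ} :
    ∀ (L : List (Σ V : Type, SimpleGraph V)), (∀ p ∈ L, p.2.Colorable n) → ∀ a : Fin n,
      ∃ f : (buildTree L).NodeType → Fin n,
        f (buildTree L).root = a ∧ ∀ u v, (buildTree L).treeAdj u v → f u ≠ f v
  | [], _, a => ⟨fun _ => a, rfl, fun _ _ h => h.elim⟩
  | ⟨ι, g⟩ :: rest, hL, a => by
    obtain ⟨C⟩ := hL ⟨ι, g⟩ List.mem_cons_self
    choose F hF_root hF using
      exists_treeAdj_coloring_buildTree rest fun p hp => hL p (List.mem_cons_of_mem _ hp)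
    refine ⟨Sum.elim (fun _ => a) (fun w => F (C w.1) w.2), rfl, ?_⟩
    rintro (_ | ⟨i, u⟩) (_ | ⟨j, v⟩) (⟨rfl, h⟩ | ⟨h, rfl, rfl⟩)
    · exact hF (C i) u v h
    · simpa only [Sum.elim_inr, hF_root] using C.valid h

theorem realization_buildTree_colorable {n : ℕ} (L : List (Σ V : Type, SimpleGraph V))
    (hL : ∀ p ∈ L, p.2.Colorable (n + 1)) : (buildTree L).realization.Colorable (n + 2) :=
  have ⟨f, _, hf⟩ := exists_treeAdj_coloring_buildTree L hL 0
  realization_colorable_succ f hf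

theorem exists_branch_colors_cover {α : Type} [Fintype α] [DecidableEq α] :
    ∀ (L : List (Σ V : Type, SimpleGraph V)) (c : (buildTree L).NodeType → α),
      (∀ u v, (buildTree L).treeAdj u v → c u ≠ c v) →
      ∀ S : Finset α, c (buildTree L).root ∉ S →
      Fintype.card α ≤ S.card + L.length + 1 →
      (∀ (i : ℕ) (h : i < L.length), ¬ L[i].2.Colorable (S.card + i + 1)) →
      ∃ b : (buildTree L).Branch, ∀ x, x ∈ S ∨ ∃ u, (buildTree L).onBranch b u ∧ c u = x
  | [], c, _, S, hroot, hcard, _ => by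
    have hS : insert (c (buildTree []).root) S = Finset.univ :=
      Finset.eq_univ_of_card _ <| le_antisymm (Finset.card_le_univ _) <| by
        rw [Finset.card_insert_of_notMem hroot]; simpa using hcard
    refine ⟨PUnit.unit, fun x => ?_⟩
    rcases Finset.mem_insert.1 (hS ▸ Finset.mem_univ x) with rfl | hx
    · exact Or.inr ⟨(buildTree []).root, trivial, rfl⟩
    · exact Or.inl hx
  | ⟨ι, g⟩ :: rest, c, hc, S, hroot, hcard, hL => by
    set S' := insert (c (Sum.inl PUnit.unit)) S
    have hS' : S'.card = S.card + 1 := Finset.card_insert_of_notMem hroot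
    -- otherwise the roots of the subtrees would colour `g` with the `S.card + 1` colours of `S'`
    obtain ⟨i, hi⟩ : ∃ i : ι, c (Sum.inr ⟨i, (buildTree rest).root⟩) ∉ S' := by
      by_contra! hall
      have C : g.Coloring S' := .mk (fun i => ⟨_, hall i⟩) fun h =>
        Subtype.coe_ne_coe.1 (hc _ _ (Or.inr ⟨h, rfl, rfl⟩))
      exact hL 0 (by simp) (by simpa [hS'] using C.colorable)
    obtain ⟨b, hb⟩ := exists_branch_colors_cover rest (fun u => c (Sum.inr ⟨i, u⟩))
      (fun u v h => hc _ _ (Or.inl ⟨rfl, h⟩)) S' hi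
      (by rw [hS']; simp only [List.length_cons] at hcard; omega)
      (fun j hj => by rw [hS', add_right_comm S.card]; exact hL (j + 1) (by simpa))
    refine ⟨⟨i, b⟩, fun x => ?_⟩
    rcases hb x with hx | ⟨u, hu, rfl⟩
    · rcases Finset.mem_insert.1 hx with rfl | hx
      · exact Or.inr ⟨Sum.inl PUnit.unit, trivial, rfl⟩
      · exact Or.inl hx
    · exact Or.inr ⟨Sum.inr ⟨i, u⟩, ⟨rfl, hu⟩, rfl⟩

theorem realization_buildTree_not_colorable (L : List (Σ V : Type, SimpleGraph V))
    (hL : ∀ (i : ℕ) (h : i < L.length), ¬ L[i].2.Colorable (i + 1)) :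
    ¬ (buildTree L).realization.Colorable (L.length + 1) := by
  rintro ⟨C⟩
  obtain ⟨b, hb⟩ := exists_branch_colors_cover L (fun u => C (Sum.inl u))
    (fun _ _ => C.ne_of_treeAdj) ∅ (Finset.notMem_empty _) (by simp) (by simpa using hL)
  obtain ⟨u, hu, hcu⟩ := (hb (C (Sum.inr b))).resolve_left (Finset.notMem_empty _)
  exact C.ne_of_onBranch hu hcu.symm

theorem chromaticNumber_realization_buildTree (L : List (Σ V : Type, SimpleGraph V))
    (hL : ∀ (i : ℕ) (h : i < L.length), L[i].2.chromaticNumber = i + 2) :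
    (buildTree L).realization.chromaticNumber = L.length + 2 := by
  have hcol : ∀ (i : ℕ) (h : i < L.length),
      L[i].2.Colorable (i + 2) ∧ ¬ L[i].2.Colorable (i + 1) :=
    fun i h => SimpleGraph.chromaticNumber_eq_iff_colorable_not_colorable.1 (hL i h)
  refine SimpleGraph.chromaticNumber_eq_iff_colorable_not_colorable.2
    ⟨realization_buildTree_colorable L fun p hp => ?_,
      realization_buildTree_not_colorable L fun i h => (hcol i h).2⟩
  obtain ⟨i, hi, rfl⟩ := List.getElem_of_mem hp
  exact (hcol i hi).1.mono (by omega)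

theorem twincutList_eq_map (m : ℕ) :
    twincutList m = (List.range m).map fun i => twincutG (i + 2) := by
  induction m with
  | zero => rfl
  | succ m ih => rw [twincutList, List.range_succ, List.map_append, ← ih]; rfl

theorem twincutList_length (m : ℕ) : (twincutList m).length = m := by
  simp [twincutList_eq_map]

theorem twincutList_getElem {m i : ℕ} (h : i < (twincutList m).length) :
    (twincutList m)[i] = twincutG (i + 2) := by
  simp [twincutList_eq_map]

/-- the chromatic number of the twincut graph `G_k` is `k`. -/
theorem twincut_chromaticNumber (k : ℕ) (hk : 1 ≤ k) :
    (twincutG k).2.chromaticNumber = k := by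
  induction k using Nat.strong_induction_on with
  | _ k ih =>
  obtain _ | _ | m := k
  · omega
  · exact SimpleGraph.chromaticNumber_bot (V := PUnit)
  · have := chromaticNumber_realization_buildTree (twincutList m) fun i h => by
      rw [twincutList_getElem, ih (i + 2) (by rw [twincutList_length] at h; omega) (by omega)]
      push_cast; rfl
    rw [twincutList_length] at this
    exact this.trans (by push_cast; ring)
end

section
/- For every integer k >= 1, the twincut graph G_k is k-colorable. -/
/-! By strong induction on `k`. In `T_k` a tree node is adjacent only to its siblings, and the
children of a node carrying `G_{i+1}` (where `i + 1 < k`) can be colored by a proper coloring of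
`G_{i+1}` with at most `k - 1` colors, independently under each parent. The branch vertices are
pairwise non-adjacent and share the remaining color. -/

namespace STree

/-- The root color is prescribed so that each subtree can be handed the color its root receives
in the coloring of its parent's graph. -/
theorem exists_treeAdj_coloring {n : ℕ} :
    ∀ (t : STree), (∀ p, IsInternalGraphOf t p → p.2.Colorable n) → ∀ c : Fin n,
      ∃ f : t.NodeType → Fin n, f t.root = c ∧ ∀ u v, t.treeAdj u v → f u ≠ f v
  | leaf, _, c => ⟨fun _ => c, rfl, fun _ _ h => h.elim⟩
  | node ι ch g, hcol, c => by
    obtain ⟨col⟩ := hcol _ (.here ι ch g)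
    have hsub i := exists_treeAdj_coloring (ch i) (fun p hp => hcol p (.child ι ch g i p hp))
    choose f hf_root hf_adj using fun i => hsub i (col i)
    refine ⟨Sum.elim (fun _ => c) (fun x => f x.1 x.2), rfl, ?_⟩
    rintro (_ | ⟨i, u⟩) (_ | ⟨j, v⟩) huv <;> try exact huv.elim
    rcases huv with ⟨rfl, huv⟩ | ⟨hij, rfl, rfl⟩
    · exact hf_adj i u v huv
    · simpa only [Sum.elim_inr, hf_root] using col.valid hij

theorem realization_colorable_succ_s6 {t : STree} {n : ℕ} (hn : 0 < n)
    (hcol : ∀ p, IsInternalGraphOf t p → p.2.Colorable n) :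
    t.realization.Colorable (n + 1) := by
  obtain ⟨f, -, hf⟩ := exists_treeAdj_coloring t hcol ⟨0, hn⟩
  refine ⟨.mk (Sum.elim (Fin.castSucc ∘ f) fun _ => Fin.last n) ?_⟩
  rintro (u | b) (v | b') ⟨-, huv⟩
  · rcases huv with huv | huv
    · exact (Fin.castSucc_injective n).ne (hf u v huv)
    · exact (Fin.castSucc_injective n).ne (hf v u huv).symm
  · exact Fin.castSucc_ne_last (f u)
  · exact (Fin.castSucc_ne_last (f v)).symm
  · simp at huv

end STree

theorem STree.IsInternalGraphOf.mem_of_buildTree :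
    ∀ {L : List (Σ V : Type, SimpleGraph V)} {p}, (buildTree L).IsInternalGraphOf p → p ∈ L
  | [], _, h => by cases h
  | ⟨_, _⟩ :: _, _, h => by
    cases h with
    | here => exact List.mem_cons_self
    | child _ _ _ _ _ h => exact List.mem_cons_of_mem _ h.mem_of_buildTree

theorem exists_eq_twincutG_of_mem_twincutList {m : ℕ} {p : Σ V : Type, SimpleGraph V}
    (hp : p ∈ twincutList m) : ∃ d < m, p = twincutG (d + 2) := by
  induction m with
  | zero => simp [twincutList] at hp
  | succ m ih =>
    rcases List.mem_append.mp hp with hp | hp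
    · obtain ⟨d, hd, rfl⟩ := ih hp
      exact ⟨d, by omega, rfl⟩
    · exact ⟨m, by omega, List.mem_singleton.mp hp⟩

theorem twincutG_add_two_colorable (m : ℕ) : (twincutG (m + 2)).2.Colorable (m + 2) := by
  induction m using Nat.strong_induction_on with
  | _ m ih =>
    refine STree.realization_colorable_succ_s6 m.succ_pos fun p hp => ?_
    obtain ⟨d, hd, rfl⟩ := exists_eq_twincutG_of_mem_twincutList hp.mem_of_buildTree
    exact (ih d hd).mono (by omega)

/-- the twincut graph `G_k` is `k`-colorable. -/
theorem twincut_colorable (k : ℕ) (hk : 1 ≤ k) :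
    (twincutG k).2.Colorable k := by
  obtain ⟨m, rfl | rfl⟩ : ∃ m, k = 1 ∨ k = m + 2 := ⟨k - 2, by omega⟩
  · exact SimpleGraph.colorable_of_fintype (V := PUnit) ⊥
  · exact twincutG_add_two_colorable m
end

section
/- Let C be the smallest class of graphs containing all graphs on at most two vertices and closed under vertex replication (adding a non-adjacent twin) and gluing along an independent set of size at most two. If (T,g) is a structured tree such that g(v) is in C for every internal node v, then the realization R(T,g) is in C. -/
/-- Vertex replication: add a new vertex (a non-adjacent twin of `v`) with the
same neighborhood as `v`, non-adjacent to `v`. Equivalently, substitute `v`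
by an independent set of size two. -/
def replicateGraph {V : Type} (G : SimpleGraph V) (v : V) : SimpleGraph (V ⊕ Unit) :=
  SimpleGraph.fromRel (fun x y =>
    match x, y with
    | Sum.inl a, Sum.inl b => G.Adj a b
    | Sum.inl a, Sum.inr _ => G.Adj a v
    | Sum.inr _, Sum.inl b => G.Adj v b
    | Sum.inr _, Sum.inr _ => False)

/-- Gluing the graphs `G` and `H` along the set `S`, embedded in `G` via `f`
and in `H` via `h`: the two copies of `S` are identified. -/
def glueGraphs {V W S : Type} (G : SimpleGraph V) (H : SimpleGraph W)
    (f : S → V) (h : S → W) : SimpleGraph (V ⊕ {w : W // w ∉ Set.range h}) :=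
  SimpleGraph.fromRel (fun x y =>
    match x, y with
    | Sum.inl a, Sum.inl b => G.Adj a b
    | Sum.inl a, Sum.inr w => ∃ s, f s = a ∧ H.Adj (h s) w.val
    | Sum.inr w, Sum.inl a => ∃ s, f s = a ∧ H.Adj (h s) w.val
    | Sum.inr w, Sum.inr w' => H.Adj w.val w'.val)

/-- The class `𝒞`: the smallest class of graphs (closed under isomorphism)
containing all graphs on at most two vertices, closed under vertex
replication (adding a non-adjacent twin) and under gluing two of its members
along an independent set of size at most two. -/
inductive InC : ∀ V : Type, SimpleGraph V → Prop where
  | small (V : Type) (G : SimpleGraph V) : Finite V → Nat.card V ≤ 2 → InC V G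
  | iso (V W : Type) (G : SimpleGraph V) (H : SimpleGraph W) :
      InC V G → Nonempty (G ≃g H) → InC W H
  | replicate (V : Type) (G : SimpleGraph V) (v : V) :
      InC V G → InC (V ⊕ Unit) (replicateGraph G v)
  | glue (V W S : Type) (G : SimpleGraph V) (H : SimpleGraph W) (f : S → V) (h : S → W) :
      InC V G → InC W H → Function.Injective f → Function.Injective h →
      Finite S → Nat.card S ≤ 2 →
      (∀ s s' : S, ¬ G.Adj (f s) (f s')) → (∀ s s' : S, ¬ H.Adj (h s) (h s')) →
      InC (V ⊕ {w : W // w ∉ Set.range h}) (glueGraphs G H f h)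

/-- `G` has a pair of non-adjacent twins: two distinct non-adjacent vertices
with the same neighborhood. -/
def HasNonadjTwins {V : Type} (G : SimpleGraph V) : Prop :=
  ∃ u v : V, u ≠ v ∧ ¬ G.Adj u v ∧ ∀ w, G.Adj u w ↔ G.Adj v w

/-- `G` has a vertex cutset which is an independent set of size at most two:
a set `S` of at most two pairwise non-adjacent vertices whose removal leaves
a disconnected graph. -/
def HasSmallIndepCutset {V : Type} (G : SimpleGraph V) : Prop :=
  ∃ S : Set V, S.ncard ≤ 2 ∧ (∀ a ∈ S, ∀ b ∈ S, ¬ G.Adj a b) ∧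
    ¬ (G.induce Sᶜ).Connected

/-!
The realization is assembled one subtree at a time. At a node `v` with children `c i`, the root
of `v` together with the roots of its children induces `g(v)` plus an isolated vertex, a gluing
along the empty set. Adding the subtree of `c i` is a gluing along the independent pair
{root of `v`, root of `c i`}: on the other side sits `R(c i)` with its root replicated, because in
`R(T,g)` the root of `v` is adjacent exactly to the branch vertices through `c i`, just as the root
of `c i` is in `R(c i)`, and no other vertex of that subtree sees anything outside it.
-/

open SimpleGraph

section Operations

variable {V W S : Type} {G : SimpleGraph V} {H : SimpleGraph W} {f : S → V} {h : S → W}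

@[simp] theorem replicateGraph_adj_inl_inl {v a b : V} :
    (replicateGraph G v).Adj (.inl a) (.inl b) ↔ G.Adj a b := by
  simp only [replicateGraph, fromRel_adj, ne_eq, Sum.inl.injEq, G.adj_comm b a, or_self,
    and_iff_right_iff_imp]
  exact G.ne_of_adj

@[simp] theorem replicateGraph_adj_inl_inr {v a : V} {u : Unit} :
    (replicateGraph G v).Adj (.inl a) (.inr u) ↔ G.Adj a v := by
  simp [replicateGraph, G.adj_comm v a]

@[simp] theorem replicateGraph_adj_inr_inl {v b : V} {u : Unit} :
    (replicateGraph G v).Adj (.inr u) (.inl b) ↔ G.Adj v b := by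
  simp [replicateGraph, G.adj_comm b v]

@[simp] theorem replicateGraph_not_adj_inr_inr {v : V} {u u' : Unit} :
    ¬ (replicateGraph G v).Adj (.inr u) (.inr u') := by
  simp [replicateGraph]

@[simp] theorem glueGraphs_adj_inl_inl {a b : V} :
    (glueGraphs G H f h).Adj (.inl a) (.inl b) ↔ G.Adj a b := by
  simp only [glueGraphs, fromRel_adj, ne_eq, Sum.inl.injEq, G.adj_comm b a, or_self,
    and_iff_right_iff_imp]
  exact G.ne_of_adj

@[simp] theorem glueGraphs_adj_inl_inr {a : V} {w : {w : W // w ∉ Set.range h}} :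
    (glueGraphs G H f h).Adj (.inl a) (.inr w) ↔ ∃ s, f s = a ∧ H.Adj (h s) w := by
  simp [glueGraphs]

@[simp] theorem glueGraphs_adj_inr_inl {a : V} {w : {w : W // w ∉ Set.range h}} :
    (glueGraphs G H f h).Adj (.inr w) (.inl a) ↔ ∃ s, f s = a ∧ H.Adj (h s) w := by
  simp [glueGraphs]

@[simp] theorem glueGraphs_adj_inr_inr {w w' : {w : W // w ∉ Set.range h}} :
    (glueGraphs G H f h).Adj (.inr w) (.inr w') ↔ H.Adj w w' := by
  simp only [glueGraphs, fromRel_adj, ne_eq, Sum.inr.injEq, H.adj_comm w'.1 w.1, or_self,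
    and_iff_right_iff_imp]
  exact fun hadj hww => H.ne_of_adj hadj (congrArg Subtype.val hww)

end Operations

namespace InC

theorem of_iso {V W : Type} {G : SimpleGraph V} {H : SimpleGraph W} (hG : InC V G)
    (e : G ≃g H) : InC W H :=
  InC.iso V W G H hG ⟨e⟩

theorem finite {V : Type} {G : SimpleGraph V} (hG : InC V G) : Finite V := by
  induction hG with
  | small _ _ hfin _ => exact hfin
  | iso V _ _ _ _ e ih => exact Finite.of_equiv V (Classical.choice e).toEquiv
  | replicate => infer_instance
  | glue => infer_instance

/-- `K[A ∪ B]` is the gluing of `K[A]` and `K[B]` along `A ∩ B`. -/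
theorem induce_union {X : Type} {K : SimpleGraph X} {A B : Set X}
    (hA : InC A (K.induce A)) (hB : InC B (K.induce B)) (hcard : (A ∩ B).encard ≤ 2)
    (hindep : K.IsIndepSet (A ∩ B))
    (hsep : ∀ x ∈ A, x ∉ B → ∀ y ∈ B, y ∉ A → ¬ K.Adj x y) :
    InC ↥(A ∪ B) (K.induce (A ∪ B)) := by
  let f : ↥(A ∩ B) → A := fun s => ⟨s, s.2.1⟩
  let h : ↥(A ∩ B) → B := fun s => ⟨s, s.2.2⟩
  have hrange {w : B} : w ∉ Set.range h ↔ w.1 ∉ A :=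
    ⟨fun hw hwA => hw ⟨⟨w, hwA, w.2⟩, rfl⟩, by rintro hwA ⟨s, rfl⟩; exact hwA s.2.1⟩
  have hnadj : ∀ x ∈ A ∩ B, ∀ y ∈ A ∩ B, ¬ K.Adj x y :=
    fun x hx y hy hxy => hindep hx hy hxy.ne hxy
  have hglue := InC.glue _ _ _ _ _ f h hA hB
    (fun s s' hss => Subtype.ext (congrArg Subtype.val hss :))
    (fun s s' hss => Subtype.ext (congrArg Subtype.val hss :))
    (Set.finite_of_encard_le_coe hcard).to_subtype
    (by rw [Nat.card_coe_set_eq, Set.ncard_def]; exact ENat.toNat_le_toNat hcard (by decide))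
    (fun s s' => hnadj s s.2 s' s'.2) (fun s s' => hnadj s s.2 s' s'.2)
  let φ : (A ⊕ {w : B // w ∉ Set.range h}) → ↥(A ∪ B) :=
    Sum.elim (fun a => ⟨a, Or.inl a.2⟩) (fun w => ⟨w.1, Or.inr w.1.2⟩)
  have hφ : Function.Bijective φ := by
    constructor
    · rintro (a | w) (a' | w') hee <;> replace hee := congrArg Subtype.val hee
      · exact congrArg _ (Subtype.ext hee)
      · exact absurd (hee ▸ a.2) (hrange.1 w'.2)
      · exact absurd (hee ▸ a'.2) (hrange.1 w.2)
      · exact congrArg _ (Subtype.ext (Subtype.ext hee))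
    · rintro ⟨x, hxA | hxB⟩
      · exact ⟨Sum.inl ⟨x, hxA⟩, rfl⟩
      · by_cases hxA : x ∈ A
        · exact ⟨Sum.inl ⟨x, hxA⟩, rfl⟩
        · exact ⟨Sum.inr ⟨⟨x, hxB⟩, hrange.2 hxA⟩, rfl⟩
  have hcross (a : A) (w : {w : B // w ∉ Set.range h}) :
      K.Adj a w ↔ ∃ s, f s = a ∧ K.Adj (h s) w := by
    constructor
    · intro hadj
      by_cases haB : a.1 ∈ B
      · exact ⟨⟨a, a.2, haB⟩, rfl, hadj⟩
      · exact absurd hadj (hsep a a.2 haB w w.1.2 (hrange.1 w.2))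
    · rintro ⟨s, rfl, hadj⟩
      exact hadj
  refine hglue.of_iso ⟨Equiv.ofBijective φ hφ, ?_⟩
  rintro (a | w) (a' | w')
  · rw [glueGraphs_adj_inl_inl]; rfl
  · rw [glueGraphs_adj_inl_inr]; exact hcross a w'
  · rw [glueGraphs_adj_inr_inl]; exact (K.adj_comm _ _).trans (hcross a' w)
  · rw [glueGraphs_adj_inr_inr]; rfl

end InC

namespace STree

abbrev Vertex (t : STree) : Type := t.NodeType ⊕ t.Branch

def rootVertex (t : STree) : t.Vertex := .inl t.root

section Realization

variable (t : STree)

theorem realization_adj_inl_inl {u v : t.NodeType} :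
    t.realization.Adj (.inl u) (.inl v) ↔ u ≠ v ∧ (t.treeAdj u v ∨ t.treeAdj v u) := by
  simp [realization]

theorem realization_adj_inl_inr {u : t.NodeType} {b : t.Branch} :
    t.realization.Adj (.inl u) (.inr b) ↔ t.onBranch b u := by
  simp [realization]

theorem realization_adj_inr_inl {u : t.NodeType} {b : t.Branch} :
    t.realization.Adj (.inr b) (.inl u) ↔ t.onBranch b u := by
  simp [realization]

theorem realization_not_adj_inr_inr {b b' : t.Branch} :
    ¬ t.realization.Adj (.inr b) (.inr b') := by
  simp [realization]

theorem not_treeAdj_root (u : t.NodeType) : ¬ t.treeAdj t.root u ∧ ¬ t.treeAdj u t.root := by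
  cases t with
  | leaf => exact ⟨id, id⟩
  | node => rcases u with _ | _ <;> exact ⟨id, id⟩

theorem onBranch_root (b : t.Branch) : t.onBranch b t.root := by
  cases t <;> trivial

theorem realization_adj_rootVertex_iff {x : t.Vertex} :
    t.realization.Adj t.rootVertex x ↔ x.isRight := by
  rcases x with u | b
  · simpa [rootVertex, realization_adj_inl_inl] using fun _ => t.not_treeAdj_root u
  · simpa [rootVertex, realization_adj_inl_inr] using t.onBranch_root b

end Realization

section Node

variable {ι : Type} (c : ι → STree) (g : SimpleGraph ι)

def embChild (i : ι) : (c i).Vertex → (node ι c g).Vertex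
  | .inl u => .inl (.inr ⟨i, u⟩)
  | .inr b => .inr ⟨i, b⟩

variable {c g}

theorem embChild_injective (i : ι) : Function.Injective (embChild c g i) := by
  rintro (u | b) (v | b') h <;> cases h <;> rfl

theorem embChild_ne_of_ne {i j : ι} (hij : i ≠ j) (x : (c i).Vertex) (y : (c j).Vertex) :
    embChild c g i x ≠ embChild c g j y := by
  rcases x with u | b <;> rcases y with v | b' <;> intro h <;> cases h <;> exact hij rfl

theorem rootVertex_ne_embChild (i : ι) (x : (c i).Vertex) :
    (node ι c g).rootVertex ≠ embChild c g i x := by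
  rcases x with u | b <;> intro h <;> cases h

theorem eq_rootVertex_or_exists_embChild (v : (node ι c g).Vertex) :
    v = (node ι c g).rootVertex ∨ ∃ i x, embChild c g i x = v := by
  rcases v with (_ | ⟨i, u⟩) | ⟨i, b⟩
  · exact .inl rfl
  · exact .inr ⟨i, .inl u, rfl⟩
  · exact .inr ⟨i, .inr b, rfl⟩

theorem treeAdj_node_same {i : ι} {u v : (c i).NodeType} :
    (node ι c g).treeAdj (.inr ⟨i, u⟩) (.inr ⟨i, v⟩) ↔ (c i).treeAdj u v :=
  ⟨fun h => h.elim (fun ⟨_, h⟩ => h) (fun h => (g.irrefl h.1).elim), fun h => .inl ⟨rfl, h⟩⟩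

theorem treeAdj_node_of_ne {i j : ι} (hij : i ≠ j) {u : (c i).NodeType} {v : (c j).NodeType} :
    (node ι c g).treeAdj (.inr ⟨i, u⟩) (.inr ⟨j, v⟩) ↔
      g.Adj i j ∧ u = (c i).root ∧ v = (c j).root :=
  ⟨fun h => h.elim (fun ⟨h, _⟩ => (hij h).elim) id, .inr⟩

theorem onBranch_node {i j : ι} {b : (c i).Branch} {u : (c j).NodeType} :
    (node ι c g).onBranch ⟨i, b⟩ (.inr ⟨j, u⟩) ↔ ∃ h : j = i, (c i).onBranch b (h ▸ u) :=
  Iff.rfl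

theorem realization_adj_embChild_inl {i : ι} {u : (c i).NodeType} {y : (c i).Vertex} :
    (node ι c g).realization.Adj (embChild c g i (.inl u)) (embChild c g i y) ↔
      (c i).realization.Adj (.inl u) y := by
  rcases y with v | b
  · refine (node ι c g).realization_adj_inl_inl.trans
      (Iff.trans ?_ (c i).realization_adj_inl_inl.symm)
    exact and_congr (not_congr ⟨fun h => by cases h; rfl, fun h => h ▸ rfl⟩)
      (or_congr treeAdj_node_same treeAdj_node_same)
  · exact (node ι c g).realization_adj_inl_inr.trans
      ((onBranch_node.trans ⟨fun ⟨_, h⟩ => h, fun h => ⟨rfl, h⟩⟩).trans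
        (c i).realization_adj_inl_inr.symm)

theorem realization_adj_embChild {i : ι} {x y : (c i).Vertex} :
    (node ι c g).realization.Adj (embChild c g i x) (embChild c g i y) ↔
      (c i).realization.Adj x y := by
  rcases x with u | b
  · exact realization_adj_embChild_inl
  rcases y with v | b'
  · rw [adj_comm, adj_comm (c i).realization]
    exact realization_adj_embChild_inl
  · exact iff_of_false (realization_not_adj_inr_inr _) (realization_not_adj_inr_inr _)

theorem realization_adj_embChild_of_ne {i j : ι} (hij : i ≠ j) {x : (c i).Vertex}
    {y : (c j).Vertex} :
    (node ι c g).realization.Adj (embChild c g i x) (embChild c g j y) ↔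
      g.Adj i j ∧ x = (c i).rootVertex ∧ y = (c j).rootVertex := by
  rcases x with u | b <;> rcases y with v | b'
  · refine (node ι c g).realization_adj_inl_inl.trans ?_
    rw [treeAdj_node_of_ne hij, treeAdj_node_of_ne hij.symm, g.adj_comm j i]
    simp only [rootVertex, Sum.inl.injEq]
    exact ⟨fun h => h.2.elim id fun ⟨hji, hv, hu⟩ => ⟨hji, hu, hv⟩,
      fun h => ⟨fun he => embChild_ne_of_ne hij (.inl u) (.inl v) (congrArg Sum.inl he),
        .inl h⟩⟩
  · refine iff_of_false ?_ fun h => Sum.inr_ne_inl h.2.2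
    exact fun h => hij (((node ι c g).realization_adj_inl_inr.1 h).1)
  · refine iff_of_false ?_ fun h => Sum.inr_ne_inl h.2.1
    exact fun h => hij (((node ι c g).realization_adj_inr_inl.1 h).1.symm)
  · exact iff_of_false (realization_not_adj_inr_inr _) fun h => Sum.inr_ne_inl h.2.1

theorem realization_adj_rootVertex_embChild {i : ι} {x : (c i).Vertex} :
    (node ι c g).realization.Adj (node ι c g).rootVertex (embChild c g i x) ↔
      (c i).realization.Adj (c i).rootVertex x := by
  rw [realization_adj_rootVertex_iff, realization_adj_rootVertex_iff]
  rcases x with _ | _ <;> rfl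

end Node

section Assembly

variable {ι : Type} (c : ι → STree) (g : SimpleGraph ι)

def subtreeWithRoot (i : ι) : Set (node ι c g).Vertex :=
  insert (node ι c g).rootVertex (Set.range (embChild c g i))

def skeleton : Set (node ι c g).Vertex :=
  {(node ι c g).rootVertex} ∪ Set.range fun j => embChild c g j (c j).rootVertex

def partialRealization (A : Set ι) : Set (node ι c g).Vertex :=
  skeleton c g ∪ ⋃ i ∈ A, Set.range (embChild c g i)

variable {c g}

noncomputable def replicateIsoInduceSubtreeWithRoot (i : ι) :
    replicateGraph (c i).realization (c i).rootVertex ≃g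
      (node ι c g).realization.induce (subtreeWithRoot c g i) := by
  let φ : (c i).Vertex ⊕ Unit → subtreeWithRoot c g i :=
    Sum.elim (fun x => ⟨embChild c g i x, Set.mem_insert_of_mem _ ⟨x, rfl⟩⟩)
      (fun _ => ⟨(node ι c g).rootVertex, Set.mem_insert _ _⟩)
  have hφ : Function.Bijective φ := by
    constructor
    · rintro (x | _) (y | _) h <;> replace h := congrArg Subtype.val h
      · exact congrArg _ (embChild_injective i h)
      · exact (rootVertex_ne_embChild i x h.symm).elim
      · exact (rootVertex_ne_embChild i y h).elim
      · rfl
    · rintro ⟨v, rfl | ⟨x, rfl⟩⟩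
      · exact ⟨.inr (), rfl⟩
      · exact ⟨.inl x, rfl⟩
  refine ⟨Equiv.ofBijective φ hφ, ?_⟩
  rintro (x | _) (y | _)
  · rw [replicateGraph_adj_inl_inl]; exact realization_adj_embChild
  · rw [replicateGraph_adj_inl_inr, adj_comm, (c i).realization.adj_comm]
    exact realization_adj_rootVertex_embChild
  · rw [replicateGraph_adj_inr_inl]; exact realization_adj_rootVertex_embChild
  · exact iff_of_false (SimpleGraph.irrefl _) replicateGraph_not_adj_inr_inr

theorem mem_C_induce_subtreeWithRoot {i : ι} (hc : InC (c i).Vertex (c i).realization) :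
    InC (subtreeWithRoot c g i) ((node ι c g).realization.induce (subtreeWithRoot c g i)) :=
  (InC.replicate _ _ _ hc).of_iso (replicateIsoInduceSubtreeWithRoot i)

theorem not_adj_rootVertex_embChild_rootVertex (i : ι) :
    ¬ (node ι c g).realization.Adj (node ι c g).rootVertex
      (embChild c g i (c i).rootVertex) :=
  fun h => (c i).realization.irrefl (realization_adj_rootVertex_embChild.1 h)

theorem mem_C_induce_skeleton (hg : InC ι g) :
    InC (skeleton c g) ((node ι c g).realization.induce (skeleton c g)) := by
  have hdisj : {(node ι c g).rootVertex} ∩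
      Set.range (fun j => embChild c g j (c j).rootVertex) = ∅ :=
    Set.singleton_inter_eq_empty.2 fun ⟨i, hi⟩ => rootVertex_ne_embChild i _ hi.symm
  let f := fun j => embChild c g j (c j).rootVertex
  have hf : Function.Injective f := fun i j h => by_contra fun hij => embChild_ne_of_ne hij _ _ h
  have hroots : InC (Set.range f) ((node ι c g).realization.induce (Set.range f)) := by
    refine hg.of_iso ⟨Equiv.ofInjective f hf, fun {i j} => ?_⟩
    by_cases hij : i = j
    · subst hij
      exact iff_of_false (SimpleGraph.irrefl _) g.irrefl
    · exact (realization_adj_embChild_of_ne hij).trans (and_iff_left ⟨rfl, rfl⟩)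
  refine InC.induce_union (A := {(node ι c g).rootVertex})
    (InC.small _ _ inferInstance (by simp)) hroots (by simp [hdisj]) (by simp [hdisj]) ?_
  rintro x rfl - y ⟨i, rfl⟩ -
  exact not_adj_rootVertex_embChild_rootVertex i

theorem partialRealization_empty : partialRealization c g ∅ = skeleton c g := by
  simp [partialRealization]

theorem partialRealization_univ : partialRealization c g Set.univ = Set.univ := by
  refine Set.eq_univ_of_forall fun v => ?_
  obtain rfl | ⟨i, x, rfl⟩ := eq_rootVertex_or_exists_embChild v
  · exact .inl (.inl rfl)
  · exact .inr (Set.mem_biUnion (Set.mem_univ i) ⟨x, rfl⟩)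

theorem partialRealization_insert (i : ι) (A : Set ι) :
    partialRealization c g (insert i A) = partialRealization c g A ∪ subtreeWithRoot c g i := by
  have hroot : (node ι c g).rootVertex ∈ skeleton c g := .inl rfl
  rw [partialRealization, partialRealization, Set.biUnion_insert]
  ext v
  simp only [subtreeWithRoot, Set.mem_union, Set.mem_insert_iff]
  by_cases hv : v = (node ι c g).rootVertex
  · simp [hv, hroot]
  · simp only [hv, false_or]
    tauto

theorem rootVertex_mem_partialRealization (A : Set ι) :
    (node ι c g).rootVertex ∈ partialRealization c g A :=
  .inl (.inl rfl)

theorem embChild_rootVertex_mem_partialRealization (A : Set ι) (i : ι) :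
    embChild c g i (c i).rootVertex ∈ partialRealization c g A :=
  .inl (.inr ⟨i, rfl⟩)

theorem partialRealization_inter_subtreeWithRoot_subset {A : Set ι} {i : ι} (hi : i ∉ A) :
    partialRealization c g A ∩ subtreeWithRoot c g i ⊆
      {(node ι c g).rootVertex, embChild c g i (c i).rootVertex} := by
  rintro v ⟨hvA, rfl | ⟨x, rfl⟩⟩
  · exact .inl rfl
  refine .inr ?_
  rcases hvA with (hv | ⟨j, hj⟩) | hv
  · exact (rootVertex_ne_embChild i x hv.symm).elim
  · obtain rfl : j = i := by_contra fun hji => embChild_ne_of_ne hji _ _ hj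
    exact hj.symm
  · obtain ⟨j, hjA, y, hy⟩ := Set.mem_iUnion₂.1 hv
    obtain rfl : j = i := by_contra fun hji => embChild_ne_of_ne hji _ _ hy
    exact (hi hjA).elim

theorem not_adj_embChild_of_notMem_subtreeWithRoot {i : ι} {x : (c i).Vertex}
    (hx : x ≠ (c i).rootVertex) {v : (node ι c g).Vertex} (hv : v ∉ subtreeWithRoot c g i) :
    ¬ (node ι c g).realization.Adj v (embChild c g i x) := by
  obtain rfl | ⟨j, y, rfl⟩ := eq_rootVertex_or_exists_embChild v
  · exact (hv (Set.mem_insert _ _)).elim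
  have hji : j ≠ i := by
    rintro rfl
    exact hv (Set.mem_insert_of_mem _ ⟨y, rfl⟩)
  exact fun h => hx ((realization_adj_embChild_of_ne hji).1 h).2.2

theorem mem_C_induce_partialRealization (hg : InC ι g)
    (hc : ∀ i, InC (c i).Vertex (c i).realization) {A : Set ι} (hA : A.Finite) :
    InC (partialRealization c g A)
      ((node ι c g).realization.induce (partialRealization c g A)) := by
  induction A, hA using Set.Finite.induction_on with
  | empty => rw [partialRealization_empty]; exact mem_C_induce_skeleton hg
  | @insert i A hi _ ih =>
    have hsub := partialRealization_inter_subtreeWithRoot_subset (c := c) (g := g) hi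
    rw [partialRealization_insert]
    refine InC.induce_union ih (mem_C_induce_subtreeWithRoot (hc i)) ?_ ?_ ?_
    · exact (Set.encard_le_encard hsub).trans ((Set.encard_insert_le _ _).trans (by norm_num))
    · refine Set.Pairwise.mono hsub (Set.pairwise_pair.2 fun _ => ⟨?_, ?_⟩)
      · exact not_adj_rootVertex_embChild_rootVertex i
      · exact fun h => not_adj_rootVertex_embChild_rootVertex i h.symm
    · rintro v hvA hvB w (rfl | ⟨x, rfl⟩) hwA
      · exact (hwA (rootVertex_mem_partialRealization A)).elim
      · refine not_adj_embChild_of_notMem_subtreeWithRoot ?_ hvB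
        rintro rfl
        exact hwA (embChild_rootVertex_mem_partialRealization A i)

theorem realization_node_mem_C (hg : InC ι g) (hc : ∀ i, InC (c i).Vertex (c i).realization) :
    InC (node ι c g).Vertex (node ι c g).realization := by
  have : Finite ι := hg.finite
  have h := mem_C_induce_partialRealization hg hc Set.finite_univ
  rw [partialRealization_univ] at h
  exact h.of_iso (induceUnivIso _)

end Assembly

end STree

/-- if every graph attached to an internal node of a structured
tree `(T, g)` belongs to `𝒞`, then the realization `R(T,g)` belongs to `𝒞`. -/
theorem realization_mem_C (t : STree)
    (hg : ∀ p : Σ ι : Type, SimpleGraph ι, t.IsInternalGraphOf p → InC p.1 p.2) :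
    InC (t.NodeType ⊕ t.Branch) t.realization := by
  induction t with
  | leaf => exact InC.small (PUnit ⊕ PUnit) _ inferInstance (by simp)
  | node ι c g ih =>
    refine STree.realization_node_mem_C (hg _ (.here ι c g)) fun i => ih i fun p hp => ?_
    exact hg p (.child ι c g i p hp)
end
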